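/- (Lemma 1 of the paper.) Let n, m ≥ 1 and q = min(n, m). Let K be an n×n lower triangular Toeplitz matrix over ZMod 2 and K' an m×m lower triangular Toeplitz matrix over ZMod 2 whose top-left q×q submatrices are equal (reciprocity of the fine channel gain). Let x_A ∈ (ZMod 2)^n, x_B ∈ (ZMod 2)^m, and set y_B = K *ᵥ x_A and y_A = K' *ᵥ x_B. Then T_lt(x̄_B) *ᵥ ȳ_B = T_lt(x̄_A) *ᵥ ȳ_A, where x̄_A, ȳ_A, x̄_B, ȳ_B ∈ (ZMod 2)^q denote the truncations to the first q coordinates. In particular both legitimate terminals using product signalling obtain an identical observation. -/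
import Mathlib

open Matrix Polynomial

noncomputable def tpoly {q : ℕ} (a : Fin q → ZMod 2) : Polynomial (ZMod 2) :=
  ∑ j : Fin q, Polynomial.C (a j) * Polynomial.X ^ (j : ℕ)

lemma tpoly_coeff {q : ℕ} (a : Fin q → ZMod 2) (t : ℕ) :
    (tpoly a).coeff t = if h : t < q then a ⟨t, h⟩ else 0 := by
  unfold tpoly
  rw [Polynomial.finset_sum_coeff]
  simp only [Polynomial.coeff_C_mul, Polynomial.coeff_X_pow, mul_ite, mul_one, mul_zero]
  split
  · case isTrue h =>
    rw [Finset.sum_eq_single (⟨t, h⟩ : Fin q)]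
    · simp
    · intro j _ hj
      rw [if_neg]
      intro he
      exact hj (Fin.ext he.symm)
    · simp
  · case isFalse h =>
    apply Finset.sum_eq_zero
    intro j _
    rw [if_neg]
    intro he
    exact h (he ▸ j.isLt)

lemma coeff_mul_range (f g : Polynomial (ZMod 2)) (i : ℕ) :
    (f * g).coeff i = ∑ j ∈ Finset.range (i + 1), f.coeff (i - j) * g.coeff j := by
  rw [mul_comm, Polynomial.coeff_mul, Finset.Nat.sum_antidiagonal_eq_sum_range_succ_mk]
  exact Finset.sum_congr rfl fun j _ => mul_comm _ _

def Tlt {q : ℕ} (x : Fin q → ZMod 2) : Matrix (Fin q) (Fin q) (ZMod 2) :=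
  fun i j =>
    if (j : ℕ) ≤ (i : ℕ) then
      x ⟨(i : ℕ) - (j : ℕ), Nat.lt_of_le_of_lt (Nat.sub_le _ _) i.isLt⟩
    else 0

lemma Tlt_mulVec_coeff {q : ℕ} (a b : Fin q → ZMod 2) (i : Fin q) :
    (Tlt a *ᵥ b) i = (tpoly a * tpoly b).coeff (i : ℕ) := by
  rw [coeff_mul_range]
  have step1 : (Tlt a *ᵥ b) i =
      ∑ j : Fin q, (fun jn : ℕ =>
        (if jn ≤ (i : ℕ) then (tpoly a).coeff ((i : ℕ) - jn) else 0) * (tpoly b).coeff jn)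
        (j : ℕ) := by
    rw [Matrix.mulVec]
    apply Finset.sum_congr rfl
    intro j _
    simp only [Tlt, tpoly_coeff]
    by_cases h : (j : ℕ) ≤ (i : ℕ)
    · rw [if_pos h, if_pos h, dif_pos, dif_pos j.isLt]
    · rw [if_neg h, if_neg h, zero_mul, zero_mul]
  rw [step1, Fin.sum_univ_eq_sum_range (fun jn : ℕ =>
      (if jn ≤ (i : ℕ) then (tpoly a).coeff ((i : ℕ) - jn) else 0) * (tpoly b).coeff jn) q]
  rw [← Finset.sum_subset (Finset.range_subset_range.mpr i.isLt)]
  · apply Finset.sum_congr rfl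
    intro j hj
    rw [if_pos (Nat.lt_succ_iff.mp (Finset.mem_range.mp hj))]
  · intro j _ hj
    rw [if_neg, zero_mul]
    exact fun hle => hj (Finset.mem_range.mpr (Nat.lt_succ_of_le hle))

lemma coeff_trunc {n q : ℕ} (h : q ≤ n) (a : Fin n → ZMod 2) (t : ℕ) (ht : t < q) :
    (tpoly fun i : Fin q => a (Fin.castLE h i)).coeff t = (tpoly a).coeff t := by
  rw [tpoly_coeff, tpoly_coeff, dif_pos ht, dif_pos (lt_of_lt_of_le ht h)]
  rfl

lemma coeff_mul_trunc {n q : ℕ} (h : q ≤ n) (a b : Fin n → ZMod 2) (t : ℕ) (ht : t < q) :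
    ((tpoly fun i : Fin q => a (Fin.castLE h i)) *
      (tpoly fun i : Fin q => b (Fin.castLE h i))).coeff t = (tpoly a * tpoly b).coeff t := by
  rw [coeff_mul_range, coeff_mul_range]
  apply Finset.sum_congr rfl
  intro j hj
  have hj' : j ≤ t := Nat.lt_succ_iff.mp (Finset.mem_range.mp hj)
  rw [coeff_trunc h a _ (lt_of_le_of_lt (Nat.sub_le _ _) ht),
    coeff_trunc h b _ (lt_of_le_of_lt hj' ht)]

/-- Lemma 1 of the paper: with reciprocity of the fine channel gain (equal
top-left `q × q` submatrices of the lower triangular Toeplitz channel matrices,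
`q = min n m`), both legitimate terminals using product signalling obtain an
identical observation: `T_lt(x̄_B) *ᵥ ȳ_B = T_lt(x̄_A) *ᵥ ȳ_A`. -/
theorem product_signalling_identical_observations (n m : ℕ) (hn : 1 ≤ n) (hm : 1 ≤ m)
    (K : Matrix (Fin n) (Fin n) (ZMod 2)) (K' : Matrix (Fin m) (Fin m) (ZMod 2))
    (hK : ∃ k : Fin n → ZMod 2, K = Tlt k)
    (hK' : ∃ k' : Fin m → ZMod 2, K' = Tlt k')
    (hrecip : K.submatrix (Fin.castLE (min_le_left n m)) (Fin.castLE (min_le_left n m)) =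
      K'.submatrix (Fin.castLE (min_le_right n m)) (Fin.castLE (min_le_right n m)))
    (xA : Fin n → ZMod 2) (xB : Fin m → ZMod 2)
    (yB : Fin n → ZMod 2) (yA : Fin m → ZMod 2)
    (hyB : yB = K *ᵥ xA) (hyA : yA = K' *ᵥ xB) :
    Tlt (fun i : Fin (min n m) => xB (Fin.castLE (min_le_right n m) i)) *ᵥ
        (fun i : Fin (min n m) => yB (Fin.castLE (min_le_left n m) i)) =
      Tlt (fun i : Fin (min n m) => xA (Fin.castLE (min_le_left n m) i)) *ᵥ
        (fun i : Fin (min n m) => yA (Fin.castLE (min_le_right n m) i)) := by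
  obtain ⟨k, rfl⟩ := hK
  obtain ⟨k', rfl⟩ := hK'
  have hqn : min n m ≤ n := min_le_left n m
  have hqm : min n m ≤ m := min_le_right n m
  have hq0 : 0 < min n m := lt_min hn hm
  have hker : (fun i : Fin (min n m) => k (Fin.castLE hqn i)) =
      fun i : Fin (min n m) => k' (Fin.castLE hqm i) := by
    funext i
    have h := congrFun (congrFun hrecip i) ⟨0, hq0⟩
    simp only [Matrix.submatrix_apply, Tlt, Fin.coe_castLE, Nat.zero_le, if_true,
      Nat.sub_zero] at h
    exact h
  funext i
  rw [Tlt_mulVec_coeff, Tlt_mulVec_coeff]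
  have hyBt : ∀ t : ℕ, t < min n m →
      (tpoly fun j : Fin (min n m) => yB (Fin.castLE hqn j)).coeff t =
        ((tpoly fun j : Fin (min n m) => k (Fin.castLE hqn j)) *
          (tpoly fun j : Fin (min n m) => xA (Fin.castLE hqn j))).coeff t := by
    intro t ht
    rw [tpoly_coeff, dif_pos ht, coeff_mul_trunc hqn _ _ _ ht, hyB]
    exact Tlt_mulVec_coeff k xA ⟨t, lt_of_lt_of_le ht hqn⟩
  have hyAt : ∀ t : ℕ, t < min n m →
      (tpoly fun j : Fin (min n m) => yA (Fin.castLE hqm j)).coeff t =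
        ((tpoly fun j : Fin (min n m) => k' (Fin.castLE hqm j)) *
          (tpoly fun j : Fin (min n m) => xB (Fin.castLE hqm j))).coeff t := by
    intro t ht
    rw [tpoly_coeff, dif_pos ht, coeff_mul_trunc hqm _ _ _ ht, hyA]
    exact Tlt_mulVec_coeff k' xB ⟨t, lt_of_lt_of_le ht hqm⟩
  have L : ((tpoly fun j : Fin (min n m) => xB (Fin.castLE hqm j)) *
      (tpoly fun j : Fin (min n m) => yB (Fin.castLE hqn j))).coeff (i : ℕ) =
      ((tpoly fun j : Fin (min n m) => xB (Fin.castLE hqm j)) *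
        ((tpoly fun j : Fin (min n m) => k (Fin.castLE hqn j)) *
          (tpoly fun j : Fin (min n m) => xA (Fin.castLE hqn j)))).coeff (i : ℕ) := by
    rw [coeff_mul_range, coeff_mul_range]
    apply Finset.sum_congr rfl
    intro j hj
    rw [hyBt j (lt_of_le_of_lt (Nat.lt_succ_iff.mp (Finset.mem_range.mp hj)) i.isLt)]
  have R : ((tpoly fun j : Fin (min n m) => xA (Fin.castLE hqn j)) *
      (tpoly fun j : Fin (min n m) => yA (Fin.castLE hqm j))).coeff (i : ℕ) =
      ((tpoly fun j : Fin (min n m) => xA (Fin.castLE hqn j)) *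
        ((tpoly fun j : Fin (min n m) => k' (Fin.castLE hqm j)) *
          (tpoly fun j : Fin (min n m) => xB (Fin.castLE hqm j)))).coeff (i : ℕ) := by
    rw [coeff_mul_range, coeff_mul_range]
    apply Finset.sum_congr rfl
    intro j hj
    rw [hyAt j (lt_of_le_of_lt (Nat.lt_succ_iff.mp (Finset.mem_range.mp hj)) i.isLt)]
  rw [L, R, hker]
  congr 1
  ring
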